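/- Consider the cdga inclusion φ: (Λ(a), 0) → (Λ(a,b,x), d) with |a| = |b| = 2, |x| = 3, d(x) = a² + b². Define the ℚ-linear map r: Λ(a,b,x) → Λ(a) by r(bⁱx·a^j) = 0 for all i,j ≥ 0, r(bⁱa^j) = 0 for i odd, and r(bⁱa^j) = (-1)^{i/2} a^{i+j} for i even. Then r is a chain map, is Λ(a)-linear (r(a·ξ) = a·r(ξ)), and satisfies r∘φ = id. In particular φ admits a retraction of (Λ(a),0)-modules. -/

import Mathlib

/-!
Since `d a = d b = 0` and `a`, `b` have even degree, `d` commutes with left multiplication by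
monomials in `a` and `b`; hence `d` kills `aʲbⁱ` and sends `aʲbⁱx` to `aʲ⁺²bⁱ + aʲbⁱ⁺²`.
The sign `(-1)^{i/2}` in the definition of `r` is chosen exactly so that `r` cancels this sum,
and `r` visibly commutes with raising the `a`-exponent, which gives `Λ(a)`-linearity on the
basis; `r ∘ φ = id` is then `Λ(a)`-linearity applied to `1`.
-/

section Leibniz

variable {A : Type*} [Ring A] [Algebra ℚ A] {𝒜 : ℕ → Submodule ℚ A} {d : A →ₗ[ℚ] A}

theorem map_one_eq_zero_of_leibniz (h1 : (1 : A) ∈ 𝒜 0)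
    (hleib : ∀ (i : ℕ) (u v : A), u ∈ 𝒜 i → d (u * v) = d u * v + ((-1 : ℚ) ^ i) • (u * d v)) :
    d 1 = 0 := by
  simpa using hleib 0 1 1 h1

theorem map_pow_mul_of_leibniz
    (hleib : ∀ (i : ℕ) (u v : A), u ∈ 𝒜 i → d (u * v) = d u * v + ((-1 : ℚ) ^ i) • (u * d v))
    {i : ℕ} (hi : Even i) {u : A} (hu : u ∈ 𝒜 i) (hdu : d u = 0) (n : ℕ) (v : A) :
    d (u ^ n * v) = u ^ n * d v := by
  induction n with
  | zero => simp
  | succ n ih => rw [pow_succ', mul_assoc, hleib i u _ hu, hdu, ih, hi.neg_one_pow, zero_mul,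
      zero_add, one_smul, mul_assoc]

end Leibniz

section Retraction

variable {A B : Type*} [Ring A] [Algebra ℚ A] [Ring B] [Algebra ℚ B] {a b : A} {a₀ : B}
  {r : A →ₗ[ℚ] B}

theorem map_pow_add_two_mul_add_map_mul_pow_add_two
    (hr2 : ∀ j i : ℕ, Odd i → r (a ^ j * b ^ i) = 0)
    (hr3 : ∀ j k : ℕ, r (a ^ j * b ^ (2 * k)) = ((-1 : ℚ) ^ k) • a₀ ^ (2 * k + j)) (j i : ℕ) :
    r (a ^ (j + 2) * b ^ i) + r (a ^ j * b ^ (i + 2)) = 0 := by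
  rcases Nat.even_or_odd' i with ⟨k, rfl | rfl⟩
  · rw [show 2 * k + 2 = 2 * (k + 1) by ring, hr3, hr3, pow_succ,
      show 2 * (k + 1) + j = 2 * k + (j + 2) by ring]
    module
  · rw [hr2 _ _ (odd_two_mul_add_one k), hr2 _ _ ((odd_two_mul_add_one k).add_even even_two),
      add_zero]

theorem map_pow_add_mul
    (hr2 : ∀ j i : ℕ, Odd i → r (a ^ j * b ^ i) = 0)
    (hr3 : ∀ j k : ℕ, r (a ^ j * b ^ (2 * k)) = ((-1 : ℚ) ^ k) • a₀ ^ (2 * k + j)) (m j i : ℕ) :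
    r (a ^ (m + j) * b ^ i) = a₀ ^ m * r (a ^ j * b ^ i) := by
  rcases Nat.even_or_odd' i with ⟨k, rfl | rfl⟩
  · rw [hr3, hr3, mul_smul_comm, ← pow_add, show 2 * k + (m + j) = m + (2 * k + j) by ring]
  · rw [hr2 _ _ (odd_two_mul_add_one k), hr2 _ _ (odd_two_mul_add_one k), mul_zero]

theorem map_pow_mul_eq_of_basis (bas : Module.Basis (ℕ × ℕ × Bool) ℚ A) {x : A}
    (hbas : ∀ (j i : ℕ) (e : Bool), bas (j, i, e) = a ^ j * b ^ i * (if e then x else 1))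
    (hr1 : ∀ j i : ℕ, r (a ^ j * b ^ i * x) = 0)
    (hr2 : ∀ j i : ℕ, Odd i → r (a ^ j * b ^ i) = 0)
    (hr3 : ∀ j k : ℕ, r (a ^ j * b ^ (2 * k)) = ((-1 : ℚ) ^ k) • a₀ ^ (2 * k + j)) (m : ℕ)
    (u : A) : r (a ^ m * u) = a₀ ^ m * r u := by
  suffices r ∘ₗ LinearMap.mulLeft ℚ (a ^ m) = LinearMap.mulLeft ℚ (a₀ ^ m) ∘ₗ r from
    LinearMap.congr_fun this u
  refine bas.ext fun ⟨j, i, e⟩ => ?_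
  simp only [LinearMap.comp_apply, LinearMap.mulLeft_apply, hbas, ← mul_assoc, ← pow_add]
  cases e
  · simpa only [Bool.false_eq_true, if_false, mul_one] using map_pow_add_mul hr2 hr3 m j i
  · simp only [if_true, hr1, mul_zero]

theorem comp_eq_zero_of_basis (bas : Module.Basis (ℕ × ℕ × Bool) ℚ A) {x : A}
    (hbas : ∀ (j i : ℕ) (e : Bool), bas (j, i, e) = a ^ j * b ^ i * (if e then x else 1))
    {d : A →ₗ[ℚ] A} (hd : ∀ (j i : ℕ) (v : A), d (a ^ j * b ^ i * v) = a ^ j * b ^ i * d v)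
    (hd1 : d 1 = 0) (hdx : d x = a * a + b * b) (hab : Commute a b)
    (hr2 : ∀ j i : ℕ, Odd i → r (a ^ j * b ^ i) = 0)
    (hr3 : ∀ j k : ℕ, r (a ^ j * b ^ (2 * k)) = ((-1 : ℚ) ^ k) • a₀ ^ (2 * k + j)) :
    r ∘ₗ d = 0 := by
  refine bas.ext fun ⟨j, i, e⟩ => ?_
  cases e
  · simp only [LinearMap.comp_apply, LinearMap.zero_apply, hbas, Bool.false_eq_true, if_false,
      hd, hd1, mul_zero, map_zero]
  · have hdx' : a ^ j * b ^ i * (a * a + b * b) = a ^ (j + 2) * b ^ i + a ^ j * b ^ (i + 2) := by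
      rw [mul_add, mul_assoc (a ^ j), ((hab.pow_right i).symm.mul_right (hab.pow_right i).symm).eq]
      noncomm_ring
    simpa [hbas, hd, hdx, hdx'] using map_pow_add_two_mul_add_map_mul_pow_add_two hr2 hr3 j i

end Retraction

theorem map_mul_eq_of_basis {A B : Type*} [Ring A] [Algebra ℚ A] [Ring B] [Algebra ℚ B]
    {a₀ : B} (basB : Module.Basis ℕ ℚ B) (hbasB : ∀ k : ℕ, basB k = a₀ ^ k)
    {φ : B →ₐ[ℚ] A} {r : A →ₗ[ℚ] B} (h : ∀ (m : ℕ) (u : A), r (φ a₀ ^ m * u) = a₀ ^ m * r u)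
    (v : B) (u : A) : r (φ v * u) = v * r u := by
  suffices r ∘ₗ LinearMap.mulRight ℚ u ∘ₗ φ.toLinearMap = LinearMap.mulRight ℚ (r u) from
    LinearMap.congr_fun this v
  refine basB.ext fun m => ?_
  simpa [hbasB] using h m u

theorem module_retraction_Stanley_example_general
    -- B = (Λ(a₀), 0)
    (B : Type) [Ring B] [Algebra ℚ B]
    (a₀ : B)
    (basB : Module.Basis ℕ ℚ B) (hbasB : ∀ k : ℕ, basB k = a₀ ^ k)
    -- A = (Λ(a,b,x), d)
    (A : Type) [Ring A] [Algebra ℚ A]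
    (𝒜 : ℕ → Submodule ℚ A)
    (honeA : (1 : A) ∈ 𝒜 0)
    (hcommA : ∀ (i j : ℕ) (u v : A), u ∈ 𝒜 i → v ∈ 𝒜 j →
      u * v = ((-1 : ℚ) ^ (i * j)) • (v * u))
    (a b x : A) (ha : a ∈ 𝒜 2) (hb : b ∈ 𝒜 2)
    (bas : Module.Basis (ℕ × ℕ × Bool) ℚ A)
    (hbas : ∀ (j i : ℕ) (e : Bool),
      bas (j, i, e) = a ^ j * b ^ i * (if e then x else 1))
    (d : A →ₗ[ℚ] A)
    (hleib : ∀ (i : ℕ) (u v : A), u ∈ 𝒜 i →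
      d (u * v) = d u * v + ((-1 : ℚ) ^ i) • (u * d v))
    (hda : d a = 0) (hdb : d b = 0) (hdx : d x = a * a + b * b)
    -- φ with φ(a₀) = a
    (φ : B →ₐ[ℚ] A) (hφa : φ a₀ = a)
    -- the linear map r defined by the given values on the basis
    (r : A →ₗ[ℚ] B)
    (hr1 : ∀ j i : ℕ, r (a ^ j * b ^ i * x) = 0)
    (hr2 : ∀ j i : ℕ, Odd i → r (a ^ j * b ^ i) = 0)
    (hr3 : ∀ j k : ℕ, r (a ^ j * b ^ (2 * k)) = ((-1 : ℚ) ^ k) • a₀ ^ (2 * k + j)) :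
    -- r is a chain map (target differential is zero), Λ(a)-linear, and retracts φ:
    (∀ u : A, r (d u) = 0) ∧
    (∀ (v : B) (u : A), r (φ v * u) = v * r u) ∧
    (∀ v : B, r (φ v) = v) := by
  have hab : Commute a b := by
    simpa [commute_iff_eq, Even.neg_one_pow ⟨2, rfl⟩] using hcommA 2 2 a b ha hb
  have hd : ∀ (j i : ℕ) (v : A), d (a ^ j * b ^ i * v) = a ^ j * b ^ i * d v := fun j i v => by
    rw [mul_assoc, map_pow_mul_of_leibniz hleib even_two ha hda,
      map_pow_mul_of_leibniz hleib even_two hb hdb, mul_assoc]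
  have hchain : r ∘ₗ d = 0 := comp_eq_zero_of_basis bas hbas hd
    (map_one_eq_zero_of_leibniz honeA hleib) hdx hab hr2 hr3
  have hlin : ∀ (v : B) (u : A), r (φ v * u) = v * r u :=
    map_mul_eq_of_basis basB hbasB fun m => hφa ▸ map_pow_mul_eq_of_basis bas hbas hr1 hr2 hr3 m
  have hr_one : r 1 = 1 := by simpa using hr3 0 0
  exact ⟨LinearMap.congr_fun hchain, hlin, fun v => by simpa [hr_one] using hlin v 1⟩

/-- For the cdga inclusion φ : (Λ(a),0) → (Λ(a,b,x),d) with |a| = |b| = 2, |x| = 3,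
d(x) = a² + b², the ℚ-linear map r defined on the basis by r(aʲbⁱx) = 0,
r(aʲbⁱ) = 0 for i odd, and r(aʲb^{2k}) = (-1)ᵏ a^{2k+j}, is a chain map, is
Λ(a)-linear, and satisfies r ∘ φ = id.  In particular φ admits a retraction of
(Λ(a),0)-modules. -/
theorem module_retraction_Stanley_example
    -- B = (Λ(a₀), 0)
    (B : Type) [Ring B] [Algebra ℚ B]
    (a₀ : B)
    (basB : Module.Basis ℕ ℚ B) (hbasB : ∀ k : ℕ, basB k = a₀ ^ k)
    -- A = (Λ(a,b,x), d)
    (A : Type) [Ring A] [Algebra ℚ A]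
    (𝒜 : ℕ → Submodule ℚ A)
    (honeA : (1 : A) ∈ 𝒜 0)
    (hgmulA : ∀ (i j : ℕ) (u v : A), u ∈ 𝒜 i → v ∈ 𝒜 j → u * v ∈ 𝒜 (i + j))
    (hcommA : ∀ (i j : ℕ) (u v : A), u ∈ 𝒜 i → v ∈ 𝒜 j →
      u * v = ((-1 : ℚ) ^ (i * j)) • (v * u))
    (a b x : A) (ha : a ∈ 𝒜 2) (hb : b ∈ 𝒜 2) (hx : x ∈ 𝒜 3)
    (bas : Module.Basis (ℕ × ℕ × Bool) ℚ A)
    (hbas : ∀ (j i : ℕ) (e : Bool),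
      bas (j, i, e) = a ^ j * b ^ i * (if e then x else 1))
    (d : A →ₗ[ℚ] A)
    (hd2 : ∀ u, d (d u) = 0)
    (hddeg : ∀ (i : ℕ) (u : A), u ∈ 𝒜 i → d u ∈ 𝒜 (i + 1))
    (hleib : ∀ (i : ℕ) (u v : A), u ∈ 𝒜 i →
      d (u * v) = d u * v + ((-1 : ℚ) ^ i) • (u * d v))
    (hda : d a = 0) (hdb : d b = 0) (hdx : d x = a * a + b * b)
    -- φ with φ(a₀) = a
    (φ : B →ₐ[ℚ] A) (hφa : φ a₀ = a)
    -- the linear map r defined by the given values on the basis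
    (r : A →ₗ[ℚ] B)
    (hr1 : ∀ j i : ℕ, r (a ^ j * b ^ i * x) = 0)
    (hr2 : ∀ j i : ℕ, Odd i → r (a ^ j * b ^ i) = 0)
    (hr3 : ∀ j k : ℕ, r (a ^ j * b ^ (2 * k)) = ((-1 : ℚ) ^ k) • a₀ ^ (2 * k + j)) :
    -- r is a chain map (target differential is zero), Λ(a)-linear, and retracts φ:
    (∀ u : A, r (d u) = 0) ∧
    (∀ (v : B) (u : A), r (φ v * u) = v * r u) ∧
    (∀ v : B, r (φ v) = v) :=
  module_retraction_Stanley_example_general B a₀ basB hbasB A 𝒜 honeA hcommA a b x ha hb bas hbas d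
    hleib hda hdb hdx φ hφa r hr1 hr2 hr3
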